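/- Let b : ℝⁿ → ℝⁿ be globally Lipschitz and fix x₁, x₂ ∈ ℝⁿ with x₁ ≠ x₂. (i) If (T*, φ*) with 0 < T* < ∞ and φ* ∈ A_{T*} attains the double infimum inf_{T>0} inf_{φ∈A_T} S_T(φ), then the rescaled path φ̄*(s) = φ*(sT*) satisfies S_{T*}(φ*) = Ŝ(φ̄*) = inf_{φ̄∈A₁} Ŝ(φ̄) and T* = T̂(φ̄*). (ii) Conversely, if φ̄* minimizes Ŝ over A₁ and T* := T̂(φ̄*) < ∞, then φ*(t) := φ̄*(t/T*) satisfies S_{T*}(φ*) = inf_{T>0} inf_{φ∈A_T} S_T(φ), i.e. (T*, φ*) is a minimizer of Problem II. -/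

import Mathlib

open MeasureTheory Filter intervalIntegral
open scoped RealInnerProductSpace Topology

noncomputable section

/-- `φ` is an `H¹` path on `[0,T]` with (weak) derivative `dφ`:
`dφ` is square integrable on `(0,T)` and `φ` is the primitive of `dφ`. -/
def IsH1Path {n : ℕ} (T : ℝ) (φ dφ : ℝ → EuclideanSpace ℝ (Fin n)) : Prop :=
  MeasureTheory.MemLp dφ 2 (MeasureTheory.volume.restrict (Set.Ioc (0:ℝ) T)) ∧
  ∀ t ∈ Set.Icc (0:ℝ) T, φ t = φ 0 + ∫ s in (0:ℝ)..t, dφ s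

/-- The Freidlin–Wentzell action functional `S_T(φ) = (1/2)∫₀ᵀ ‖φ' - b(φ)‖² dt`. -/
def action {n : ℕ} (b : EuclideanSpace ℝ (Fin n) → EuclideanSpace ℝ (Fin n))
    (T : ℝ) (φ dφ : ℝ → EuclideanSpace ℝ (Fin n)) : ℝ :=
  (1/2) * ∫ t in (0:ℝ)..T, ‖dφ t - b (φ t)‖^2

/-- The `L²(0,T)` norm of an `ℝⁿ`-valued function. -/
def L2norm {n : ℕ} (T : ℝ) (f : ℝ → EuclideanSpace ℝ (Fin n)) : ℝ :=
  Real.sqrt (∫ t in (0:ℝ)..T, ‖f t‖^2)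

/-- The admissible set `A_T` of `H¹` transition paths from `x₁` to `x₂` on `[0,T]`. -/
def Adm {n : ℕ} (T : ℝ) (x₁ x₂ : EuclideanSpace ℝ (Fin n))
    (φ dφ : ℝ → EuclideanSpace ℝ (Fin n)) : Prop :=
  IsH1Path T φ dφ ∧ φ 0 = x₁ ∧ φ T = x₂

/-- The rescaled action `S(T, φ̄) = (T/2)∫₀¹ ‖T⁻¹ φ̄' - b(φ̄)‖² ds` on `[0,1]`. -/
def Ssc {n : ℕ} (b : EuclideanSpace ℝ (Fin n) → EuclideanSpace ℝ (Fin n))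
    (T : ℝ) (φ dφ : ℝ → EuclideanSpace ℝ (Fin n)) : ℝ :=
  (T/2) * ∫ s in (0:ℝ)..1, ‖T⁻¹ • dφ s - b (φ s)‖^2

/-- The optimal linear time scaling `T̂(φ̄) = ‖φ̄'‖_{L²} / ‖b(φ̄)‖_{L²}`. -/
def That {n : ℕ} (b : EuclideanSpace ℝ (Fin n) → EuclideanSpace ℝ (Fin n))
    (φ dφ : ℝ → EuclideanSpace ℝ (Fin n)) : ℝ :=
  L2norm 1 dφ / L2norm 1 (fun s => b (φ s))

/-- The reformulated action `Ŝ(φ̄) = ‖φ̄'‖_{L²} ‖b(φ̄)‖_{L²} − ∫₀¹⟨φ̄', b(φ̄)⟩ ds`. -/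
def Shat {n : ℕ} (b : EuclideanSpace ℝ (Fin n) → EuclideanSpace ℝ (Fin n))
    (φ dφ : ℝ → EuclideanSpace ℝ (Fin n)) : ℝ :=
  L2norm 1 dφ * L2norm 1 (fun s => b (φ s)) - ∫ s in (0:ℝ)..1, ⟪dφ s, b (φ s)⟫

/-- `a` and `c` are adjacent nodes of the partition (finite node set) `P`. -/
def Adjacent (P : Finset ℝ) (a c : ℝ) : Prop :=
  a ∈ P ∧ c ∈ P ∧ a < c ∧ ∀ p ∈ P, p ≤ a ∨ c ≤ p

/-- `φ` is affine on each element of the partition `P`. -/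
def PiecewiseAffineOn {n : ℕ} (P : Finset ℝ) (φ : ℝ → EuclideanSpace ℝ (Fin n)) : Prop :=
  ∀ a c, Adjacent P a c → ∀ t ∈ Set.Icc a c,
    φ t = φ a + ((t - a) / (c - a)) • (φ c - φ a)

/-- `P` is a partition (node set) of `[0,T]`. -/
def IsPartition (T : ℝ) (P : Finset ℝ) : Prop :=
  (0:ℝ) ∈ P ∧ T ∈ P ∧ ∀ p ∈ P, p ∈ Set.Icc (0:ℝ) T

/-- Weak convergence `φ_k ⇀ φ` in `H¹((0,T); ℝⁿ)`, expressed by testing the pair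
`(φ_k, φ_k')` against arbitrary pairs of `L²` functions. -/
def WeakH1Tendsto {n : ℕ} (T : ℝ) (φk dφk : ℕ → ℝ → EuclideanSpace ℝ (Fin n))
    (φ dφ : ℝ → EuclideanSpace ℝ (Fin n)) : Prop :=
  ∀ g₀ g₁ : ℝ → EuclideanSpace ℝ (Fin n),
    MeasureTheory.MemLp g₀ 2 (MeasureTheory.volume.restrict (Set.Ioc (0:ℝ) T)) →
    MeasureTheory.MemLp g₁ 2 (MeasureTheory.volume.restrict (Set.Ioc (0:ℝ) T)) →
    Tendsto (fun k => (∫ t in (0:ℝ)..T, ⟪φk k t, g₀ t⟫) + ∫ t in (0:ℝ)..T, ⟪dφk k t, g₁ t⟫)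
      atTop (𝓝 ((∫ t in (0:ℝ)..T, ⟪φ t, g₀ t⟫) + ∫ t in (0:ℝ)..T, ⟪dφ t, g₁ t⟫))

/-- Values of `S_T` over the admissible set `A_T` (Problem I). -/
def probISet {n : ℕ} (b : EuclideanSpace ℝ (Fin n) → EuclideanSpace ℝ (Fin n))
    (T : ℝ) (x₁ x₂ : EuclideanSpace ℝ (Fin n)) : Set ℝ :=
  {v | ∃ φ dφ, Adm T x₁ x₂ φ dφ ∧ v = action b T φ dφ}

/-- Values of `S_T` over all `T > 0` and `φ ∈ A_T` (Problem II); its infimum is the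
quasi-potential `V(x₁,x₂)`. -/
def probIISet {n : ℕ} (b : EuclideanSpace ℝ (Fin n) → EuclideanSpace ℝ (Fin n))
    (x₁ x₂ : EuclideanSpace ℝ (Fin n)) : Set ℝ :=
  {v | ∃ T, 0 < T ∧ ∃ φ dφ, Adm T x₁ x₂ φ dφ ∧ v = action b T φ dφ}

/-- Values of `Ŝ` over the rescaled admissible set `A₁`. -/
def shatSet {n : ℕ} (b : EuclideanSpace ℝ (Fin n) → EuclideanSpace ℝ (Fin n))
    (x₁ x₂ : EuclideanSpace ℝ (Fin n)) : Set ℝ :=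
  {v | ∃ φ dφ, Adm 1 x₁ x₂ φ dφ ∧ v = Shat b φ dφ}

/-- Membership in the finite element space `B_h` of continuous piecewise affine
admissible paths associated with the partition `P`. -/
def BmemP {n : ℕ} (P : Finset ℝ) (T : ℝ) (x₁ x₂ : EuclideanSpace ℝ (Fin n))
    (φ dφ : ℝ → EuclideanSpace ℝ (Fin n)) : Prop :=
  Adm T x₁ x₂ φ dφ ∧ PiecewiseAffineOn P φ

/-- Values of `S_T` over the finite element space `B_h` (the discretized Problem I). -/
def discSet {n : ℕ} (b : EuclideanSpace ℝ (Fin n) → EuclideanSpace ℝ (Fin n))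
    (P : Finset ℝ) (T : ℝ) (x₁ x₂ : EuclideanSpace ℝ (Fin n)) : Set ℝ :=
  {v | ∃ φ dφ, BmemP P T x₁ x₂ φ dφ ∧ v = action b T φ dφ}

/-- Values of `Ŝ` over the finite element space `B̄_h` (the discretized Problem II). -/
def discShatSet {n : ℕ} (b : EuclideanSpace ℝ (Fin n) → EuclideanSpace ℝ (Fin n))
    (P : Finset ℝ) (x₁ x₂ : EuclideanSpace ℝ (Fin n)) : Set ℝ :=
  {v | ∃ φ dφ, BmemP P 1 x₁ x₂ φ dφ ∧ v = Shat b φ dφ}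

/-!
Substituting `t = sT` turns `S_T(φ)` into `S(T, φ̄)`, and expanding the square gives
`S(T, φ̄) = (‖φ̄'‖ - T ‖b(φ̄)‖)² / (2T) + Ŝ(φ̄)`.
Hence `Ŝ(φ̄)` is the infimum of `S(·, φ̄)` over `T > 0`, so the two double infima coincide, and
`S(T, φ̄) = Ŝ(φ̄)` exactly when `‖φ̄'‖ = T ‖b(φ̄)‖`. A path from `x₁ ≠ x₂` has `‖φ̄'‖ > 0`,
so at a minimizer `‖b(φ̄)‖ > 0` and this balance reads `T = T̂(φ̄)`.
-/

open Set

lemma memLp_comp_mul_right_Ioc {E : Type*} [NormedAddCommGroup E] {f : ℝ → E}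
    {p : ENNReal} {S c : ℝ} (hc : 0 < c) (hf : MemLp f p (volume.restrict (Ioc 0 S))) :
    MemLp (fun x => f (x * c)) p (volume.restrict (Ioc 0 (S / c))) := by
  have hmeas : Measurable fun x : ℝ => x * c := measurable_id.mul_const c
  have hpre : Ioc 0 (S / c) = (fun x : ℝ => x * c) ⁻¹' Ioc 0 S := by
    rw [preimage_mul_const_Ioc₀ _ _ hc, zero_div]
  have hmap : Measure.map (fun x : ℝ => x * c) (volume.restrict (Ioc 0 (S / c)))
      = ENNReal.ofReal c⁻¹ • volume.restrict (Ioc 0 S) := by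
    rw [hpre, ← Measure.restrict_map hmeas measurableSet_Ioc, Real.map_volume_mul_right hc.ne',
      abs_of_pos (inv_pos.2 hc), Measure.restrict_smul]
  exact (hmap ▸ hf.smul_measure ENNReal.ofReal_ne_top).comp_of_map hmeas.aemeasurable

lemma intervalIntegrable_norm_sq_of_memLp {E : Type*} [NormedAddCommGroup E] {f : ℝ → E} {T : ℝ}
    (hT : 0 ≤ T) (hf : MemLp f 2 (volume.restrict (Ioc 0 T))) :
    IntervalIntegrable (fun t => ‖f t‖ ^ 2) volume 0 T :=
  (intervalIntegrable_iff_integrableOn_Ioc_of_le hT).2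
    ((memLp_two_iff_integrable_sq_norm hf.1).1 hf)

lemma intervalIntegrable_inner_of_memLp {E : Type*} [NormedAddCommGroup E]
    [InnerProductSpace ℝ E] {f g : ℝ → E} {T : ℝ} (hT : 0 ≤ T)
    (hf : MemLp f 2 (volume.restrict (Ioc 0 T))) (hg : MemLp g 2 (volume.restrict (Ioc 0 T))) :
    IntervalIntegrable (fun t => ⟪f t, g t⟫) volume 0 T :=
  (intervalIntegrable_iff_integrableOn_Ioc_of_le hT).2
    (memLp_one_iff_integrable.1 ((innerSL ℝ (E := E)).memLp_of_bilin 1 hf hg))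

lemma exists_pos_sq_sub_mul_div_lt {a β ε : ℝ} (ha : 0 ≤ a) (hβ : 0 ≤ β) (hε : 0 < ε) :
    ∃ T > 0, (a - T * β) ^ 2 / (2 * T) < ε := by
  rcases ha.eq_or_lt with rfl | ha
  · refine ⟨ε / (β ^ 2 + 1), by positivity, ?_⟩
    rw [div_lt_iff₀ (by positivity)]
    field_simp
    nlinarith [sq_nonneg β]
  rcases hβ.eq_or_lt with rfl | hβ
  · refine ⟨a ^ 2 / ε, by positivity, ?_⟩
    rw [mul_zero, sub_zero]
    field_simp
    linarith
  · exact ⟨a / β, div_pos ha hβ, by field_simp; simpa using hε⟩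

section

variable {n : ℕ} {b : EuclideanSpace ℝ (Fin n) → EuclideanSpace ℝ (Fin n)}
  {x₁ x₂ : EuclideanSpace ℝ (Fin n)} {S T : ℝ} {φ dφ : ℝ → EuclideanSpace ℝ (Fin n)}

namespace IsH1Path

lemma integrableOn (h : IsH1Path T φ dφ) : IntegrableOn dφ (Ioc 0 T) :=
  h.1.integrable (by norm_num)

lemma continuousOn (h : IsH1Path T φ dφ) (hT : 0 ≤ T) : ContinuousOn φ (Icc 0 T) := by
  have hint : IntegrableOn dφ (uIcc 0 T) := by
    rw [uIcc_of_le hT, integrableOn_Icc_iff_integrableOn_Ioc]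
    exact h.integrableOn
  have hprim := continuousOn_const.add (continuousOn_primitive_interval hint) (f := fun _ => φ 0)
  rw [uIcc_of_le hT] at hprim
  exact hprim.congr h.2

lemma memLp_comp (hb : Continuous b) (h : IsH1Path T φ dφ) (hT : 0 ≤ T) :
    MemLp (fun t => b (φ t)) 2 (volume.restrict (Ioc 0 T)) := by
  have hcont : ContinuousOn (fun t => b (φ t)) (Icc 0 T) :=
    hb.comp_continuousOn (h.continuousOn hT)
  refine (memLp_two_iff_integrable_sq_norm
    ((hcont.mono Ioc_subset_Icc_self).aestronglyMeasurable measurableSet_Ioc)).2 ?_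
  exact ((hcont.norm.pow 2).integrableOn_Icc).mono_set Ioc_subset_Icc_self

lemma comp_mul_right (h : IsH1Path S φ dφ) {c : ℝ} (hc : 0 < c) :
    IsH1Path (S / c) (fun t => φ (t * c)) (fun t => c • dφ (t * c)) := by
  refine ⟨(memLp_comp_mul_right_Ioc hc h.1).const_smul c, fun t ht => ?_⟩
  have htc : t * c ∈ Icc 0 S :=
    ⟨mul_nonneg ht.1 hc.le, (le_div_iff₀ hc).1 ht.2⟩
  change φ (t * c) = φ (0 * c) + ∫ s in (0:ℝ)..t, c • dφ (s * c)
  rw [h.2 _ htc, intervalIntegral.integral_smul,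
    intervalIntegral.smul_integral_comp_mul_right, zero_mul]

lemma eq_of_L2norm_eq_zero (h : IsH1Path T φ dφ) (hT : 0 ≤ T) (h0 : L2norm T dφ = 0) :
    φ T = φ 0 := by
  have hsq : IntegrableOn (fun t => ‖dφ t‖ ^ 2) (Ioc 0 T) :=
    (memLp_two_iff_integrable_sq_norm h.1.1).1 h.1
  have hI : ∫ t in Ioc 0 T, ‖dφ t‖ ^ 2 = 0 := by
    rw [← intervalIntegral.integral_of_le hT, ← Real.sqrt_eq_zero
      (intervalIntegral.integral_nonneg hT fun _ _ => sq_nonneg _)]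
    exact h0
  have hzero : dφ =ᵐ[volume.restrict (Ioc 0 T)] 0 := by
    filter_upwards [(integral_eq_zero_iff_of_nonneg (fun t => sq_nonneg _) hsq).1 hI] with t ht
    simpa using ht
  rw [h.2 T ⟨hT, le_rfl⟩, intervalIntegral.integral_of_le hT, integral_congr_ae hzero]
  simp

end IsH1Path

lemma sq_L2norm (hT : 0 ≤ T) (f : ℝ → EuclideanSpace ℝ (Fin n)) :
    L2norm T f ^ 2 = ∫ t in (0:ℝ)..T, ‖f t‖ ^ 2 :=
  Real.sq_sqrt (intervalIntegral.integral_nonneg hT fun _ _ => sq_nonneg _)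

lemma Ssc_nonneg (hT : 0 ≤ T) : 0 ≤ Ssc b T φ dφ :=
  mul_nonneg (by positivity) (intervalIntegral.integral_nonneg zero_le_one fun _ _ => sq_nonneg _)

lemma Ssc_eq_sq_div_add_Shat (hb : Continuous b) (h : IsH1Path 1 φ dφ) (hT : T ≠ 0) :
    Ssc b T φ dφ
      = (L2norm 1 dφ - T * L2norm 1 (fun s => b (φ s))) ^ 2 / (2 * T) + Shat b φ dφ := by
  have hbφ := h.memLp_comp hb zero_le_one
  have hA := intervalIntegrable_norm_sq_of_memLp zero_le_one h.1
  have hB := intervalIntegrable_norm_sq_of_memLp zero_le_one hbφ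
  have hC := intervalIntegrable_inner_of_memLp zero_le_one h.1 hbφ
  have hexpand : ∀ s, ‖T⁻¹ • dφ s - b (φ s)‖ ^ 2
      = T⁻¹ ^ 2 * ‖dφ s‖ ^ 2 - 2 * T⁻¹ * ⟪dφ s, b (φ s)⟫ + ‖b (φ s)‖ ^ 2 := fun s => by
    rw [norm_sub_sq_real, norm_smul, real_inner_smul_left, Real.norm_eq_abs, mul_pow, sq_abs]
    ring
  have hint : ∫ s in (0:ℝ)..1, ‖T⁻¹ • dφ s - b (φ s)‖ ^ 2
      = T⁻¹ ^ 2 * (∫ s in (0:ℝ)..1, ‖dφ s‖ ^ 2)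
        - 2 * T⁻¹ * (∫ s in (0:ℝ)..1, ⟪dφ s, b (φ s)⟫) + ∫ s in (0:ℝ)..1, ‖b (φ s)‖ ^ 2 := by
    simp_rw [hexpand]
    rw [intervalIntegral.integral_add ((hA.const_mul _).sub (hC.const_mul _)) hB,
      intervalIntegral.integral_sub (hA.const_mul _) (hC.const_mul _),
      intervalIntegral.integral_const_mul, intervalIntegral.integral_const_mul]
  rw [Ssc, hint, Shat, ← sq_L2norm zero_le_one, ← sq_L2norm zero_le_one]
  field_simp
  ring

lemma Shat_le_Ssc (hb : Continuous b) (h : IsH1Path 1 φ dφ) (hT : 0 < T) :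
    Shat b φ dφ ≤ Ssc b T φ dφ := by
  rw [Ssc_eq_sq_div_add_Shat hb h hT.ne']
  have : 0 ≤ (L2norm 1 dφ - T * L2norm 1 (fun s => b (φ s))) ^ 2 / (2 * T) := by positivity
  linarith

lemma Ssc_eq_Shat_iff (hb : Continuous b) (h : IsH1Path 1 φ dφ) (hT : 0 < T) :
    Ssc b T φ dφ = Shat b φ dφ ↔ L2norm 1 dφ = T * L2norm 1 (fun s => b (φ s)) := by
  rw [Ssc_eq_sq_div_add_Shat hb h hT.ne', add_eq_right, div_eq_zero_iff, sq_eq_zero_iff,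
    sub_eq_zero]
  have : 2 * T ≠ 0 := by positivity
  simp [this]

lemma exists_Ssc_lt_Shat_add (hb : Continuous b) (h : IsH1Path 1 φ dφ) {ε : ℝ} (hε : 0 < ε) :
    ∃ T > 0, Ssc b T φ dφ < Shat b φ dφ + ε := by
  obtain ⟨T, hT, hlt⟩ := exists_pos_sq_sub_mul_div_lt (a := L2norm 1 dφ)
    (β := L2norm 1 (fun s => b (φ s))) (Real.sqrt_nonneg _) (Real.sqrt_nonneg _) hε
  exact ⟨T, hT, by rw [Ssc_eq_sq_div_add_Shat hb h hT.ne']; linarith⟩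

lemma Shat_nonneg (hb : Continuous b) (h : IsH1Path 1 φ dφ) : 0 ≤ Shat b φ dφ := by
  refine le_of_forall_pos_lt_add fun ε hε => ?_
  obtain ⟨T, hT, hlt⟩ := exists_Ssc_lt_Shat_add hb h hε
  exact (Ssc_nonneg hT.le).trans_lt hlt

lemma action_eq_Ssc (b : EuclideanSpace ℝ (Fin n) → EuclideanSpace ℝ (Fin n)) (T : ℝ)
    (φ dφ : ℝ → EuclideanSpace ℝ (Fin n)) :
    action b T φ dφ = Ssc b T (fun s => φ (s * T)) (fun s => T • dφ (s * T)) := by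
  rcases eq_or_ne T 0 with rfl | hT
  · simp [action, Ssc]
  have hsub := intervalIntegral.smul_integral_comp_mul_right (a := 0) (b := 1)
    (fun t => ‖dφ t - b (φ t)‖ ^ 2) T
  simp only [zero_mul, one_mul, smul_eq_mul] at hsub
  simp only [action, Ssc, smul_smul, inv_mul_cancel₀ hT, one_smul, ← hsub]
  ring

lemma action_comp_div_eq_Ssc (hT : T ≠ 0) :
    action b T (fun t => φ (t / T)) (fun t => T⁻¹ • dφ (t / T)) = Ssc b T φ dφ := by
  simp [action_eq_Ssc, mul_div_cancel_right₀ _ hT, smul_smul, hT]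

namespace Adm

lemma comp_mul_right (h : Adm S x₁ x₂ φ dφ) {c : ℝ} (hc : 0 < c) :
    Adm (S / c) x₁ x₂ (fun t => φ (t * c)) (fun t => c • dφ (t * c)) :=
  ⟨h.1.comp_mul_right hc, by simpa using h.2.1, by simpa [div_mul_cancel₀ _ hc.ne'] using h.2.2⟩

lemma rescale_to_unit (h : Adm T x₁ x₂ φ dφ) (hT : 0 < T) :
    Adm 1 x₁ x₂ (fun s => φ (s * T)) (fun s => T • dφ (s * T)) := by
  simpa [div_self hT.ne'] using h.comp_mul_right hT

lemma rescale_of_unit (h : Adm 1 x₁ x₂ φ dφ) (hT : 0 < T) :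
    Adm T x₁ x₂ (fun t => φ (t / T)) (fun t => T⁻¹ • dφ (t / T)) := by
  simpa [div_eq_mul_inv] using h.comp_mul_right (inv_pos.2 hT)

end Adm

lemma adm_segment : Adm 1 x₁ x₂ (fun t => x₁ + t • (x₂ - x₁)) (fun _ => x₂ - x₁) :=
  ⟨⟨memLp_const _, fun t _ => by simp [smul_sub]⟩, by simp, by simp⟩

lemma bddBelow_probIISet : BddBelow (probIISet b x₁ x₂) := by
  refine ⟨0, ?_⟩
  rintro _ ⟨T, hT, φ, dφ, -, rfl⟩
  rw [action_eq_Ssc]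
  exact Ssc_nonneg hT.le

lemma bddBelow_shatSet (hb : Continuous b) : BddBelow (shatSet b x₁ x₂) := by
  refine ⟨0, ?_⟩
  rintro _ ⟨φ, dφ, h, rfl⟩
  exact Shat_nonneg hb h.1

lemma Ssc_mem_probIISet (h : Adm 1 x₁ x₂ φ dφ) (hT : 0 < T) :
    Ssc b T φ dφ ∈ probIISet b x₁ x₂ :=
  ⟨T, hT, _, _, h.rescale_of_unit hT, (action_comp_div_eq_Ssc hT.ne').symm⟩

lemma sInf_probIISet_eq_sInf_shatSet (hb : Continuous b) :
    sInf (probIISet b x₁ x₂) = sInf (shatSet b x₁ x₂) := by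
  apply le_antisymm
  · refine le_csInf ⟨_, _, _, adm_segment, rfl⟩ ?_
    rintro _ ⟨φ, dφ, h, rfl⟩
    refine le_of_forall_pos_lt_add fun ε hε => ?_
    obtain ⟨T, hT, hlt⟩ := exists_Ssc_lt_Shat_add hb h.1 hε
    exact (csInf_le bddBelow_probIISet (Ssc_mem_probIISet h hT)).trans_lt hlt
  · refine le_csInf ⟨_, Ssc_mem_probIISet adm_segment one_pos⟩ ?_
    rintro _ ⟨T, hT, φ, dφ, h, rfl⟩
    have h1 := h.rescale_to_unit hT
    rw [action_eq_Ssc]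
    exact (csInf_le (bddBelow_shatSet hb) ⟨_, _, h1, rfl⟩).trans (Shat_le_Ssc hb h1.1 hT)

end

/-- equivalence between minimizers of Problem II and minimizers of the
reformulated functional `Ŝ` on `A₁`.
(i) If `(T*, φ*)` with `0 < T* < ∞` attains the double infimum, then the rescaled path
`φ̄*(s) = φ*(sT*)` satisfies `S_{T*}(φ*) = Ŝ(φ̄*) = inf_{A₁} Ŝ` and `T* = T̂(φ̄*)`.
(ii) Conversely, if `φ̄*` minimizes `Ŝ` over `A₁` and `T* := T̂(φ̄*) ∈ (0,∞)`, then
`φ*(t) = φ̄*(t/T*)` attains the double infimum. -/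
theorem stmt3 {n : ℕ} (b : EuclideanSpace ℝ (Fin n) → EuclideanSpace ℝ (Fin n))
    (K : NNReal) (hb : LipschitzWith K b)
    (x₁ x₂ : EuclideanSpace ℝ (Fin n)) (hx : x₁ ≠ x₂) :
    -- (i)
    (∀ (Tstar : ℝ) (φ dφ : ℝ → EuclideanSpace ℝ (Fin n)),
      0 < Tstar → Adm Tstar x₁ x₂ φ dφ →
      action b Tstar φ dφ = sInf (probIISet b x₁ x₂) →
      action b Tstar φ dφ
          = Shat b (fun s => φ (s * Tstar)) (fun s => Tstar • dφ (s * Tstar)) ∧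
      Shat b (fun s => φ (s * Tstar)) (fun s => Tstar • dφ (s * Tstar))
          = sInf (shatSet b x₁ x₂) ∧
      Tstar = That b (fun s => φ (s * Tstar)) (fun s => Tstar • dφ (s * Tstar))) ∧
    -- (ii)
    (∀ (φbar dbar : ℝ → EuclideanSpace ℝ (Fin n)),
      Adm 1 x₁ x₂ φbar dbar →
      Shat b φbar dbar = sInf (shatSet b x₁ x₂) →
      0 < That b φbar dbar →
      action b (That b φbar dbar)
          (fun t => φbar (t / That b φbar dbar))
          (fun t => (That b φbar dbar)⁻¹ • dbar (t / That b φbar dbar))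
        = sInf (probIISet b x₁ x₂)) := by
  have hbc := hb.continuous
  have hinf := sInf_probIISet_eq_sInf_shatSet (x₁ := x₁) (x₂ := x₂) hbc
  refine ⟨fun T φ dφ hT hadm hmin => ?_, fun φ dφ hadm hmin hT => ?_⟩
  · have h1 := hadm.rescale_to_unit hT
    have hSsc := le_antisymm (by
      rw [← action_eq_Ssc, hmin, hinf]
      exact csInf_le (bddBelow_shatSet hbc) ⟨_, _, h1, rfl⟩) (Shat_le_Ssc hbc h1.1 hT)
    have hbal := (Ssc_eq_Shat_iff hbc h1.1 hT).1 hSsc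
    have hβ : L2norm 1 (fun s => b (φ (s * T))) ≠ 0 := fun hβ => by
      rw [hβ, mul_zero] at hbal
      have hends := h1.1.eq_of_L2norm_eq_zero zero_le_one hbal
      exact hx (by simpa [hadm.2.1, hadm.2.2] using hends.symm)
    have haction := (action_eq_Ssc b T φ dφ).trans hSsc
    refine ⟨haction, haction.symm.trans (hmin.trans hinf), ?_⟩
    rw [That, hbal, mul_div_cancel_right₀ _ hβ]
  · have hβ : L2norm 1 (fun s => b (φ s)) ≠ 0 := fun h0 => by simp [That, h0] at hT
    have hbal : L2norm 1 dφ = That b φ dφ * L2norm 1 (fun s => b (φ s)) :=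
      (div_mul_cancel₀ _ hβ).symm
    rw [action_comp_div_eq_Ssc hT.ne', (Ssc_eq_Shat_iff hbc hadm.1 hT).2 hbal, hmin, hinf]
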